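/- arXiv:1602.05281 — 5 statements merged into one kernel-verified Lean document; each statement's English description precedes it below -/
import Mathlib

section
/- Let R be an n×n real symmetric positive definite matrix, K : [0,∞) → ℝ a nonnegative function and ω : [0,∞) → ℝⁿ a function, such that K, s ↦ sK(s), s ↦ s²K(s), s ↦ K(s)ω(s), s ↦ sK(s)ω(s) and s ↦ K(s)ω(s)ᵀRω(s) are integrable on [0,∞). Set K₀ := ∫_0^∞ K(s) ds, K₁ := ∫_0^∞ sK(s) ds, K₂ := ∫_0^∞ s²K(s) ds, and assume K₀ > 0 and K₂ − K₁²/K₀ > 0. Then ∫_0^∞ K(s) ω(s)ᵀ R ω(s) ds ≥ K₀⁻¹ (∫_0^∞ K(s)ω(s) ds)ᵀ R (∫_0^∞ K(s)ω(s) ds) + (K₂ − K₁²/K₀)⁻¹ Ω̃ᵀ R Ω̃, where Ω̃ := (K₁/K₀) ∫_0^∞ K(s)ω(s) ds − ∫_0^∞ sK(s)ω(s) ds. -/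
/-!
For all `u v`, the integral of `K s * Q (ω s - u - s • v)` is nonnegative, `Q` being the quadratic
form of `R`. Expanding it expresses it as a quadratic polynomial in `(u, v)` whose coefficients are
the moments `K₀, K₁, K₂, ∫ K ω, ∫ s K ω, ∫ K Q ω`; at its minimiser this polynomial equals the
difference of the two sides of the inequality, the Schur complement `K₂ - K₁² / K₀` of the
moment matrix appearing when `u` is eliminated.
-/

open MeasureTheory Matrix

section
variable {E : Type*} [NormedAddCommGroup E] [NormedSpace ℝ E]

theorem mul_apply_sub_sub_smul (B : E →L[ℝ] E →L[ℝ] ℝ) (hB : ∀ x y, B x y = B y x)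
    (k s : ℝ) (w u v : E) :
    k * B (w - u - s • v) (w - u - s • v) =
      k * B w w - 2 * B (k • w) u - 2 * B ((s * k) • w) v + k * B u u
        + s * k * (2 * B u v) + s ^ 2 * k * B v v := by
  simp only [map_sub, map_smul, _root_.sub_apply, FunLike.coe_smul,
    Pi.smul_apply, smul_eq_mul, hB w u, hB w v, hB v u]
  ring

theorem le_of_forall_moment_quadratic_nonneg (B : E →L[ℝ] E →L[ℝ] ℝ) (hB : ∀ x y, B x y = B y x)
    {M K0 K1 K2 : ℝ} {A C Ω : E} (hK0 : K0 ≠ 0) (hV : K2 - K1 ^ 2 / K0 ≠ 0)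
    (hΩ : Ω = (K1 / K0) • A - C)
    (h : ∀ u v, 0 ≤ M - 2 * B A u - 2 * B C v + K0 * B u u + 2 * K1 * B u v + K2 * B v v) :
    K0⁻¹ * B A A + (K2 - K1 ^ 2 / K0)⁻¹ * B Ω Ω ≤ M := by
  set V := K2 - K1 ^ 2 / K0 with hV_def
  obtain rfl : C = (K1 / K0) • A - Ω := by rw [hΩ]; abel
  have hK2 : K2 = V + K1 ^ 2 / K0 := by rw [hV_def]; ring
  rw [← sub_nonneg]
  -- the critical point: `K0 • u + K1 • v = A` and `K1 • u + K2 • v = C`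
  convert h (K0⁻¹ • (A + (K1 / V) • Ω)) (-V⁻¹ • Ω) using 1
  simp only [map_add, map_sub, map_smul, _root_.add_apply, _root_.sub_apply, FunLike.coe_smul,
    Pi.smul_apply, smul_eq_mul, hB Ω A, hK2]
  field_simp
  ring

variable [CompleteSpace E]

theorem integral_apply_apply_const {α : Type*} [MeasurableSpace α] (B : E →L[ℝ] E →L[ℝ] ℝ)
    {μ : Measure α} {f : α → E} (hf : Integrable f μ) (u : E) :
    ∫ s, B (f s) u ∂μ = B (∫ s, f s ∂μ) u :=
  (B.flip u).integral_comp_comm hf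

theorem integral_mul_apply_sub_sub_smul (B : E →L[ℝ] E →L[ℝ] ℝ) (hB : ∀ x y, B x y = B y x)
    {μ : Measure ℝ} {K : ℝ → ℝ} {ω : ℝ → E}
    (hK : Integrable K μ) (hsK : Integrable (fun s => s * K s) μ)
    (hs2K : Integrable (fun s => s ^ 2 * K s) μ) (hKω : Integrable (fun s => K s • ω s) μ)
    (hsKω : Integrable (fun s => (s * K s) • ω s) μ)
    (hKωω : Integrable (fun s => K s * B (ω s) (ω s)) μ) (u v : E) :
    ∫ s, K s * B (ω s - u - s • v) (ω s - u - s • v) ∂μ =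
      ∫ s, K s * B (ω s) (ω s) ∂μ - 2 * B (∫ s, K s • ω s ∂μ) u
        - 2 * B (∫ s, (s * K s) • ω s ∂μ) v + (∫ s, K s ∂μ) * B u u
        + 2 * (∫ s, s * K s ∂μ) * B u v + (∫ s, s ^ 2 * K s ∂μ) * B v v := by
  have hKωu := ((B.flip u).integrable_comp hKω).const_mul 2
  have hsKωv := ((B.flip v).integrable_comp hsKω).const_mul 2
  simp only [ContinuousLinearMap.flip_apply] at hKωu hsKωv
  simp only [mul_apply_sub_sub_smul B hB]
  rw [integral_add _ (hs2K.mul_const _), integral_add _ (hsK.mul_const _),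
    integral_add _ (hK.mul_const _), integral_sub _ hsKωv, integral_sub hKωω hKωu,
    integral_const_mul, integral_const_mul, integral_apply_apply_const B hKω,
    integral_apply_apply_const B hsKω, integral_mul_const,
    integral_mul_const, integral_mul_const]
  · ring
  all_goals fun_prop

theorem jensen_first_moment_inequality (B : E →L[ℝ] E →L[ℝ] ℝ) (hB : ∀ x y, B x y = B y x)
    (hB_nonneg : ∀ x, 0 ≤ B x x) {μ : Measure ℝ} {K : ℝ → ℝ} {ω : ℝ → E}
    (hK_nonneg : 0 ≤ᵐ[μ] K) (hK : Integrable K μ) (hsK : Integrable (fun s => s * K s) μ)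
    (hs2K : Integrable (fun s => s ^ 2 * K s) μ) (hKω : Integrable (fun s => K s • ω s) μ)
    (hsKω : Integrable (fun s => (s * K s) • ω s) μ)
    (hKωω : Integrable (fun s => K s * B (ω s) (ω s)) μ) {K0 K1 K2 : ℝ} {Ω : E}
    (hK0 : K0 = ∫ s, K s ∂μ) (hK1 : K1 = ∫ s, s * K s ∂μ) (hK2 : K2 = ∫ s, s ^ 2 * K s ∂μ)
    (hΩ : Ω = (K1 / K0) • (∫ s, K s • ω s ∂μ) - ∫ s, (s * K s) • ω s ∂μ)
    (hK0_ne : K0 ≠ 0) (hV : K2 - K1 ^ 2 / K0 ≠ 0) :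
    K0⁻¹ * B (∫ s, K s • ω s ∂μ) (∫ s, K s • ω s ∂μ) + (K2 - K1 ^ 2 / K0)⁻¹ * B Ω Ω ≤
      ∫ s, K s * B (ω s) (ω s) ∂μ := by
  refine le_of_forall_moment_quadratic_nonneg B hB hK0_ne hV hΩ fun u v => ?_
  rw [hK0, hK1, hK2, ← integral_mul_apply_sub_sub_smul B hB hK hsK hs2K hKω hsKω hKωω]
  exact integral_nonneg_of_ae <| hK_nonneg.mono fun s hs => mul_nonneg hs (hB_nonneg _)
end

theorem extended_jensen_infinite_interval_moments_general {n : ℕ}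
    (R : Matrix (Fin n) (Fin n) ℝ) (hRpd : R.PosDef)
    (K : ℝ → ℝ) (ω : ℝ → (Fin n → ℝ))
    (hKnonneg : ∀ s ∈ Set.Ici (0 : ℝ), 0 ≤ K s)
    (hK : IntegrableOn K (Set.Ici (0 : ℝ)))
    (hsK : IntegrableOn (fun s => s * K s) (Set.Ici (0 : ℝ)))
    (hs2K : IntegrableOn (fun s => s ^ 2 * K s) (Set.Ici (0 : ℝ)))
    (hKω : IntegrableOn (fun s => K s • ω s) (Set.Ici (0 : ℝ)))
    (hsKω : IntegrableOn (fun s => (s * K s) • ω s) (Set.Ici (0 : ℝ)))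
    (hKωRω : IntegrableOn (fun s => K s * (ω s ⬝ᵥ R.mulVec (ω s))) (Set.Ici (0 : ℝ)))
    (K0 K1 K2 : ℝ)
    (hK0 : K0 = ∫ s in Set.Ici (0 : ℝ), K s)
    (hK1 : K1 = ∫ s in Set.Ici (0 : ℝ), s * K s)
    (hK2 : K2 = ∫ s in Set.Ici (0 : ℝ), s ^ 2 * K s)
    (hK0pos : 0 < K0)
    (hvar : 0 < K2 - K1 ^ 2 / K0)
    (Ω : Fin n → ℝ)
    (hΩ : Ω = (K1 / K0) • (∫ s in Set.Ici (0 : ℝ), K s • ω s) -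
      ∫ s in Set.Ici (0 : ℝ), (s * K s) • ω s) :
    ∫ s in Set.Ici (0 : ℝ), K s * (ω s ⬝ᵥ R.mulVec (ω s)) ≥
      K0⁻¹ * ((∫ s in Set.Ici (0 : ℝ), K s • ω s) ⬝ᵥ
          R.mulVec (∫ s in Set.Ici (0 : ℝ), K s • ω s)) +
      (K2 - K1 ^ 2 / K0)⁻¹ * (Ω ⬝ᵥ R.mulVec Ω) := by
  set B := (Matrix.toBilin' R).toContinuousBilinearMap
  have hB : ∀ x y, B x y = x ⬝ᵥ R *ᵥ y := Matrix.toBilin'_apply' R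
  have hB_symm : ∀ x y, B x y = B y x :=
    (isSymm_toBilin'_iff_isSymm.mpr (isHermitian_iff_isSymm.mp hRpd.isHermitian)).eq
  have hB_nonneg (x) : 0 ≤ B x x := by
    simpa only [star_trivial, hB] using hRpd.posSemidef.dotProduct_mulVec_nonneg x
  have h := jensen_first_moment_inequality B hB_symm hB_nonneg
    ((ae_restrict_iff' measurableSet_Ici).mpr (.of_forall hKnonneg)) hK hsK hs2K hKω hsKω
    (by simpa only [IntegrableOn, hB] using hKωRω) hK0 hK1 hK2 hΩ hK0pos.ne' hvar.ne'
  simpa only [hB] using h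

/-- Corollary 1: generalized Jensen integral inequality over an infinite interval
with the first-moment auxiliary function. -/
theorem extended_jensen_infinite_interval_moments {n : ℕ}
    (R : Matrix (Fin n) (Fin n) ℝ) (hRsym : R.IsSymm) (hRpd : R.PosDef)
    (K : ℝ → ℝ) (ω : ℝ → (Fin n → ℝ))
    (hKnonneg : ∀ s ∈ Set.Ici (0 : ℝ), 0 ≤ K s)
    (hK : IntegrableOn K (Set.Ici (0 : ℝ)))
    (hsK : IntegrableOn (fun s => s * K s) (Set.Ici (0 : ℝ)))
    (hs2K : IntegrableOn (fun s => s ^ 2 * K s) (Set.Ici (0 : ℝ)))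
    (hKω : IntegrableOn (fun s => K s • ω s) (Set.Ici (0 : ℝ)))
    (hsKω : IntegrableOn (fun s => (s * K s) • ω s) (Set.Ici (0 : ℝ)))
    (hKωRω : IntegrableOn (fun s => K s * (ω s ⬝ᵥ R.mulVec (ω s))) (Set.Ici (0 : ℝ)))
    (K0 K1 K2 : ℝ)
    (hK0 : K0 = ∫ s in Set.Ici (0 : ℝ), K s)
    (hK1 : K1 = ∫ s in Set.Ici (0 : ℝ), s * K s)
    (hK2 : K2 = ∫ s in Set.Ici (0 : ℝ), s ^ 2 * K s)
    (hK0pos : 0 < K0)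
    (hvar : 0 < K2 - K1 ^ 2 / K0)
    (Ω : Fin n → ℝ)
    (hΩ : Ω = (K1 / K0) • (∫ s in Set.Ici (0 : ℝ), K s • ω s) -
      ∫ s in Set.Ici (0 : ℝ), (s * K s) • ω s) :
    ∫ s in Set.Ici (0 : ℝ), K s * (ω s ⬝ᵥ R.mulVec (ω s)) ≥
      K0⁻¹ * ((∫ s in Set.Ici (0 : ℝ), K s • ω s) ⬝ᵥ
          R.mulVec (∫ s in Set.Ici (0 : ℝ), K s • ω s)) +
      (K2 - K1 ^ 2 / K0)⁻¹ * (Ω ⬝ᵥ R.mulVec Ω) :=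
  extended_jensen_infinite_interval_moments_general R hRpd K ω hKnonneg hK hsK hs2K hKω hsKω hKωRω
    K0 K1 K2 hK0 hK1 hK2 hK0pos hvar Ω hΩ
end

section
/- Let R be an n×n real symmetric positive definite matrix, t ∈ ℝ, h ≥ 0, K : [0,∞) → ℝ a nonnegative function, g : ℝ → ℝ and ω : ℝ → ℝⁿ functions, such that all the double integrals below over the region {(θ,s) : θ ∈ [0,∞), s ∈ [t−θ−h, t]} (of K(θ), K(θ)g(s), K(θ)g(s)², K(θ)ω(s), K(θ)g(s)ω(s), and K(θ)ω(s)ᵀRω(s)) are well defined and finite, ∫_0^∞ ∫_{t−θ−h}^{t} K(θ)g(s) ds dθ = 0, ∫_0^∞ ∫_{t−θ−h}^{t} K(θ)g(s)² ds dθ > 0, and K_{1h} := ∫_0^∞ K(θ)(θ+h) dθ > 0. Then ∫_0^∞ ∫_{t−θ−h}^{t} K(θ) ω(s)ᵀ R ω(s) ds dθ ≥ K_{1h}⁻¹ (∫_0^∞ ∫_{t−θ−h}^{t} K(θ)ω(s) ds dθ)ᵀ R (∫_0^∞ ∫_{t−θ−h}^{t} K(θ)ω(s) ds dθ) + (∫_0^∞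 ∫_{t−θ−h}^{t} K(θ)g(s)² ds dθ)⁻¹ Σᵀ R Σ, where Σ := ∫_0^∞ ∫_{t−θ−h}^{t} K(θ)g(s)ω(s) ds dθ. -/
/-!
Complete the square: for any vectors `a`, `b` the iterated integral of
`K(θ) (ω(s) - a - g(s) b)ᵀ R (ω(s) - a - g(s) b)` is nonnegative. Expanding it, the weight
`∫∫ K = ∫ K(θ)(θ + h) dθ` multiplies `aᵀRa`, the vanishing `∫∫ K g` kills the cross term in
`a` and `b`, and the choices `a = K₁ₕ⁻¹ ∫∫ K ω`, `b = (∫∫ K g²)⁻¹ ∫∫ K g ω` leave exactly the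
difference of the two sides.
-/

open MeasureTheory

section QuadExpansion

variable {E : Type*} [NormedAddCommGroup E] [NormedSpace ℝ E] (B : E →L[ℝ] E →L[ℝ] ℝ) (a b : E)
  {X : Type*} [MeasurableSpace X] {μ : Measure X}

/-- `∫ k B(w - a - γ b, w - a - γ b)` written through the moments `q = ∫ k B(w, w)`, `∫ k`,
`∫ k γ`, `∫ k γ²`, `v = ∫ k w` and `u = ∫ k γ w`; it is linear in them, so it commutes with
integration. -/
noncomputable def quadExpansion (q k k₁ k₂ : ℝ) (v u : E) : ℝ :=
  q - (B.flip a + B a) v - (B.flip b + B b) u + k * B a a + k₁ * (B a b + B b a) + k₂ * B b b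

theorem mul_apply_sub_sub_smul_s3 (k γ : ℝ) (w : E) :
    k * B (w - a - γ • b) (w - a - γ • b) =
      quadExpansion B a b (k * B w w) k (k * γ) (k * γ ^ 2) (k • w) ((k * γ) • w) := by
  simp only [quadExpansion, map_sub, map_smul, sub_apply, smul_apply, add_apply,
    ContinuousLinearMap.flip_apply, smul_eq_mul]
  ring

theorem integral_quadExpansion [CompleteSpace E] {q k k₁ k₂ : X → ℝ} {v u : X → E}
    (hq : Integrable q μ) (hk : Integrable k μ) (hk₁ : Integrable k₁ μ) (hk₂ : Integrable k₂ μ)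
    (hv : Integrable v μ) (hu : Integrable u μ) :
    ∫ x, quadExpansion B a b (q x) (k x) (k₁ x) (k₂ x) (v x) (u x) ∂μ =
      quadExpansion B a b (∫ x, q x ∂μ) (∫ x, k x ∂μ) (∫ x, k₁ x ∂μ) (∫ x, k₂ x ∂μ)
        (∫ x, v x ∂μ) (∫ x, u x ∂μ) := by
  have hv' := (B.flip a + B a).integrable_comp hv
  have hu' := (B.flip b + B b).integrable_comp hu
  unfold quadExpansion
  rw [integral_add (by fun_prop) (hk₂.mul_const _), integral_add (by fun_prop) (hk₁.mul_const _),
    integral_add (by fun_prop) (hk.mul_const _), integral_sub (by fun_prop) hu',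
    integral_sub hq hv', integral_mul_const, integral_mul_const, integral_mul_const,
    (B.flip a + B a).integral_comp_comm hv, (B.flip b + B b).integral_comp_comm hu]

theorem integral_mul_apply_sub_sub_smul_s3 [CompleteSpace E] {k γ : X → ℝ} {w : X → E}
    (hkww : Integrable (fun x => k x * B (w x) (w x)) μ) (hk : Integrable k μ)
    (hkγ : Integrable (fun x => k x * γ x) μ) (hkγ₂ : Integrable (fun x => k x * γ x ^ 2) μ)
    (hkw : Integrable (fun x => k x • w x) μ) (hkγw : Integrable (fun x => (k x * γ x) • w x) μ) :
    ∫ x, k x * B (w x - a - γ x • b) (w x - a - γ x • b) ∂μ =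
      quadExpansion B a b (∫ x, k x * B (w x) (w x) ∂μ) (∫ x, k x ∂μ) (∫ x, k x * γ x ∂μ)
        (∫ x, k x * γ x ^ 2 ∂μ) (∫ x, k x • w x ∂μ) (∫ x, (k x * γ x) • w x ∂μ) := by
  simp_rw [mul_apply_sub_sub_smul_s3]
  exact integral_quadExpansion B a b hkww hk hkγ hkγ₂ hkw hkγw

theorem quadExpansion_inv_smul {k G : ℝ} (hk : k ≠ 0) (hG : G ≠ 0) (q : ℝ) (v u : E) :
    quadExpansion B (k⁻¹ • v) (G⁻¹ • u) q k 0 G v u = q - k⁻¹ * B v v - G⁻¹ * B u u := by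
  simp only [quadExpansion, map_smul, smul_apply, add_apply,
    ContinuousLinearMap.flip_apply, smul_eq_mul]
  field_simp
  ring

end QuadExpansion

open Matrix

theorem extended_jensen_double_integral_general {n : ℕ}
    (R : Matrix (Fin n) (Fin n) ℝ) (hRpd : R.PosDef)
    (t h : ℝ) (hh : 0 ≤ h)
    (K : ℝ → ℝ) (g : ℝ → ℝ) (ω : ℝ → (Fin n → ℝ))
    (hKnonneg : ∀ θ ∈ Set.Ici (0 : ℝ), 0 ≤ K θ)
    -- inner integrability on [t-θ-h, t] for every θ ≥ 0
    (hK_in : ∀ θ ∈ Set.Ici (0 : ℝ),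
      IntegrableOn (fun _ : ℝ => K θ) (Set.Icc (t - θ - h) t))
    (hKg_in : ∀ θ ∈ Set.Ici (0 : ℝ),
      IntegrableOn (fun s => K θ * g s) (Set.Icc (t - θ - h) t))
    (hKg2_in : ∀ θ ∈ Set.Ici (0 : ℝ),
      IntegrableOn (fun s => K θ * (g s) ^ 2) (Set.Icc (t - θ - h) t))
    (hKω_in : ∀ θ ∈ Set.Ici (0 : ℝ),
      IntegrableOn (fun s => K θ • ω s) (Set.Icc (t - θ - h) t))
    (hKgω_in : ∀ θ ∈ Set.Ici (0 : ℝ),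
      IntegrableOn (fun s => (K θ * g s) • ω s) (Set.Icc (t - θ - h) t))
    (hKωRω_in : ∀ θ ∈ Set.Ici (0 : ℝ),
      IntegrableOn (fun s => K θ * (ω s ⬝ᵥ R.mulVec (ω s))) (Set.Icc (t - θ - h) t))
    -- outer integrability on [0,∞)
    (hK_out : IntegrableOn
      (fun θ => ∫ s in Set.Icc (t - θ - h) t, K θ) (Set.Ici (0 : ℝ)))
    (hKg_out : IntegrableOn
      (fun θ => ∫ s in Set.Icc (t - θ - h) t, K θ * g s) (Set.Ici (0 : ℝ)))
    (hKg2_out : IntegrableOn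
      (fun θ => ∫ s in Set.Icc (t - θ - h) t, K θ * (g s) ^ 2) (Set.Ici (0 : ℝ)))
    (hKω_out : IntegrableOn
      (fun θ => ∫ s in Set.Icc (t - θ - h) t, K θ • ω s) (Set.Ici (0 : ℝ)))
    (hKgω_out : IntegrableOn
      (fun θ => ∫ s in Set.Icc (t - θ - h) t, (K θ * g s) • ω s) (Set.Ici (0 : ℝ)))
    (hKωRω_out : IntegrableOn
      (fun θ => ∫ s in Set.Icc (t - θ - h) t, K θ * (ω s ⬝ᵥ R.mulVec (ω s)))
      (Set.Ici (0 : ℝ)))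
    (hKg0 : ∫ θ in Set.Ici (0 : ℝ), ∫ s in Set.Icc (t - θ - h) t, K θ * g s = 0)
    (hKg2pos :
      0 < ∫ θ in Set.Ici (0 : ℝ), ∫ s in Set.Icc (t - θ - h) t, K θ * (g s) ^ 2)
    (hK1hpos : 0 < ∫ θ in Set.Ici (0 : ℝ), K θ * (θ + h)) :
    ∫ θ in Set.Ici (0 : ℝ), ∫ s in Set.Icc (t - θ - h) t,
        K θ * (ω s ⬝ᵥ R.mulVec (ω s)) ≥
      (∫ θ in Set.Ici (0 : ℝ), K θ * (θ + h))⁻¹ *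
        ((∫ θ in Set.Ici (0 : ℝ), ∫ s in Set.Icc (t - θ - h) t, K θ • ω s) ⬝ᵥ
          R.mulVec
            (∫ θ in Set.Ici (0 : ℝ), ∫ s in Set.Icc (t - θ - h) t, K θ • ω s)) +
      (∫ θ in Set.Ici (0 : ℝ), ∫ s in Set.Icc (t - θ - h) t, K θ * (g s) ^ 2)⁻¹ *
        ((∫ θ in Set.Ici (0 : ℝ),
            ∫ s in Set.Icc (t - θ - h) t, (K θ * g s) • ω s) ⬝ᵥ
          R.mulVec
            (∫ θ in Set.Ici (0 : ℝ),
              ∫ s in Set.Icc (t - θ - h) t, (K θ * g s) • ω s)) := by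
  set B := (toBilin' R).toContinuousBilinearMap
  have hB : ∀ x y, x ⬝ᵥ R *ᵥ y = B x y := fun x y => (toBilin'_apply' R x y).symm
  simp only [hB] at hKωRω_in hKωRω_out ⊢
  set K1h := ∫ θ in Set.Ici (0 : ℝ), K θ * (θ + h)
  set G2 := ∫ θ in Set.Ici (0 : ℝ), ∫ s in Set.Icc (t - θ - h) t, K θ * (g s) ^ 2
  set V := ∫ θ in Set.Ici (0 : ℝ), ∫ s in Set.Icc (t - θ - h) t, K θ • ω s
  set S := ∫ θ in Set.Ici (0 : ℝ), ∫ s in Set.Icc (t - θ - h) t, (K θ * g s) • ω s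
  set a := K1h⁻¹ • V
  set b := G2⁻¹ • S
  have h_mass : ∫ θ in Set.Ici (0 : ℝ), ∫ s in Set.Icc (t - θ - h) t, K θ = K1h :=
    setIntegral_congr_fun measurableSet_Ici fun θ (hθ : 0 ≤ θ) => by
      rw [setIntegral_const, Real.volume_real_Icc_of_le (by linarith), smul_eq_mul]
      ring
  have h_expand : ∫ θ in Set.Ici (0 : ℝ), ∫ s in Set.Icc (t - θ - h) t,
      K θ * B (ω s - a - g s • b) (ω s - a - g s • b) =
        (∫ θ in Set.Ici (0 : ℝ), ∫ s in Set.Icc (t - θ - h) t, K θ * B (ω s) (ω s)) -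
          K1h⁻¹ * B V V - G2⁻¹ * B S S := by
    rw [setIntegral_congr_fun measurableSet_Ici fun θ hθ =>
        integral_mul_apply_sub_sub_smul_s3 B a b (hKωRω_in θ hθ) (hK_in θ hθ) (hKg_in θ hθ)
          (hKg2_in θ hθ) (hKω_in θ hθ) (hKgω_in θ hθ),
      integral_quadExpansion B a b hKωRω_out hK_out hKg_out hKg2_out hKω_out hKgω_out,
      h_mass, hKg0, quadExpansion_inv_smul B hK1hpos.ne' hKg2pos.ne']
  have h_nonneg : 0 ≤ ∫ θ in Set.Ici (0 : ℝ), ∫ s in Set.Icc (t - θ - h) t,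
      K θ * B (ω s - a - g s • b) (ω s - a - g s • b) :=
    setIntegral_nonneg measurableSet_Ici fun θ hθ =>
      setIntegral_nonneg measurableSet_Icc fun s _ => mul_nonneg (hKnonneg θ hθ)
        (hB _ _ ▸ hRpd.posSemidef.dotProduct_mulVec_nonneg _)
  linarith

/-- Theorem 2: generalized double-integral Jensen inequality over an infinite
horizon.  The iterated integrals `∫_0^∞ ∫_{t-θ-h}^{t} (·) ds dθ` are taken with
the inner variable `s` ranging in `[t-θ-h, t]` for each `θ ∈ [0,∞)`. -/
theorem extended_jensen_double_integral {n : ℕ}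
    (R : Matrix (Fin n) (Fin n) ℝ) (hRsym : R.IsSymm) (hRpd : R.PosDef)
    (t h : ℝ) (hh : 0 ≤ h)
    (K : ℝ → ℝ) (g : ℝ → ℝ) (ω : ℝ → (Fin n → ℝ))
    (hKnonneg : ∀ θ ∈ Set.Ici (0 : ℝ), 0 ≤ K θ)
    -- inner integrability on [t-θ-h, t] for every θ ≥ 0
    (hK_in : ∀ θ ∈ Set.Ici (0 : ℝ),
      IntegrableOn (fun _ : ℝ => K θ) (Set.Icc (t - θ - h) t))
    (hKg_in : ∀ θ ∈ Set.Ici (0 : ℝ),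
      IntegrableOn (fun s => K θ * g s) (Set.Icc (t - θ - h) t))
    (hKg2_in : ∀ θ ∈ Set.Ici (0 : ℝ),
      IntegrableOn (fun s => K θ * (g s) ^ 2) (Set.Icc (t - θ - h) t))
    (hKω_in : ∀ θ ∈ Set.Ici (0 : ℝ),
      IntegrableOn (fun s => K θ • ω s) (Set.Icc (t - θ - h) t))
    (hKgω_in : ∀ θ ∈ Set.Ici (0 : ℝ),
      IntegrableOn (fun s => (K θ * g s) • ω s) (Set.Icc (t - θ - h) t))
    (hKωRω_in : ∀ θ ∈ Set.Ici (0 : ℝ),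
      IntegrableOn (fun s => K θ * (ω s ⬝ᵥ R.mulVec (ω s))) (Set.Icc (t - θ - h) t))
    -- outer integrability on [0,∞)
    (hK_out : IntegrableOn
      (fun θ => ∫ s in Set.Icc (t - θ - h) t, K θ) (Set.Ici (0 : ℝ)))
    (hKg_out : IntegrableOn
      (fun θ => ∫ s in Set.Icc (t - θ - h) t, K θ * g s) (Set.Ici (0 : ℝ)))
    (hKg2_out : IntegrableOn
      (fun θ => ∫ s in Set.Icc (t - θ - h) t, K θ * (g s) ^ 2) (Set.Ici (0 : ℝ)))
    (hKω_out : IntegrableOn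
      (fun θ => ∫ s in Set.Icc (t - θ - h) t, K θ • ω s) (Set.Ici (0 : ℝ)))
    (hKgω_out : IntegrableOn
      (fun θ => ∫ s in Set.Icc (t - θ - h) t, (K θ * g s) • ω s) (Set.Ici (0 : ℝ)))
    (hKωRω_out : IntegrableOn
      (fun θ => ∫ s in Set.Icc (t - θ - h) t, K θ * (ω s ⬝ᵥ R.mulVec (ω s)))
      (Set.Ici (0 : ℝ)))
    (hK1h_int : IntegrableOn (fun θ => K θ * (θ + h)) (Set.Ici (0 : ℝ)))
    (hKg0 : ∫ θ in Set.Ici (0 : ℝ), ∫ s in Set.Icc (t - θ - h) t, K θ * g s = 0)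
    (hKg2pos :
      0 < ∫ θ in Set.Ici (0 : ℝ), ∫ s in Set.Icc (t - θ - h) t, K θ * (g s) ^ 2)
    (hK1hpos : 0 < ∫ θ in Set.Ici (0 : ℝ), K θ * (θ + h)) :
    ∫ θ in Set.Ici (0 : ℝ), ∫ s in Set.Icc (t - θ - h) t,
        K θ * (ω s ⬝ᵥ R.mulVec (ω s)) ≥
      (∫ θ in Set.Ici (0 : ℝ), K θ * (θ + h))⁻¹ *
        ((∫ θ in Set.Ici (0 : ℝ), ∫ s in Set.Icc (t - θ - h) t, K θ • ω s) ⬝ᵥ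
          R.mulVec
            (∫ θ in Set.Ici (0 : ℝ), ∫ s in Set.Icc (t - θ - h) t, K θ • ω s)) +
      (∫ θ in Set.Ici (0 : ℝ), ∫ s in Set.Icc (t - θ - h) t, K θ * (g s) ^ 2)⁻¹ *
        ((∫ θ in Set.Ici (0 : ℝ),
            ∫ s in Set.Icc (t - θ - h) t, (K θ * g s) • ω s) ⬝ᵥ
          R.mulVec
            (∫ θ in Set.Ici (0 : ℝ),
              ∫ s in Set.Icc (t - θ - h) t, (K θ * g s) • ω s)) :=
  extended_jensen_double_integral_general R hRpd t h hh K g ω hKnonneg hK_in hKg_in hKg2_in hKω_in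
    hKgω_in hKωRω_in hK_out hKg_out hKg2_out hKω_out hKgω_out hKωRω_out hKg0 hKg2pos hK1hpos
end

section
/- Let R be an n×n real symmetric positive definite matrix, t ∈ ℝ, h ≥ 0, K : [0,∞) → ℝ a nonnegative function and ω : ℝ → ℝⁿ a function, such that K has finite moments K₀ := ∫_0^∞ K(s) ds, K₁ := ∫_0^∞ sK(s) ds, K₂ := ∫_0^∞ s²K(s) ds, K₃ := ∫_0^∞ s³K(s) ds, and all the iterated integrals below over the region {(θ,s) : θ ∈ [0,∞), s ∈ [t−θ−h, t]} are well defined and finite. Set K_{1h} := hK₀ + K₁ and assume K_{1h} > 0. Define K̃₁ := (h³/2)K₀ + 2K₃ + (3h²K₀(hK₁+2K₂) − 3K₂²)/(2K_{1h}) and assume K̃₁ > 0. Define Σ̃ := ∫_0^∞ ∫_{t−θ−h}^{t} K(θ)(−s + t − (hK_{1h}+hK₁+K₂)/(2K_{1h})) ω(s) ds dθ. Then ∫_0^∞ ∫_{t−θ−h}^{t} K(θ) ω(s)ᵀ R ω(s) ds dθ ≥ K_{1h}⁻¹ (∫_0^∞ ∫_{t−θ−h}^{t} K(θ)ω(s)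 ds dθ)ᵀ R (∫_0^∞ ∫_{t−θ−h}^{t} K(θ)ω(s) ds dθ) + K̃₁⁻¹ Σ̃ᵀ R Σ̃. -/
/-!
If the constant `c` in `g(s) = t - s - c` is chosen so that `∫∫ K(θ) g(s) ds dθ = 0`, the
functions `1` and `g` are orthogonal for the weight `K(θ)` on the region
`{θ ≥ 0, t - θ - h ≤ s ≤ t}`, and expanding
`0 ≤ ∫∫ K(θ) (ω(s) - α - g(s) β)ᵀ R (ω(s) - α - g(s) β)` at `α = v / ∫∫ K`,
`β = Σ̃ / ∫∫ K g²` gives Bessel's inequality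
`∫∫ K ωᵀRω ≥ vᵀRv / ∫∫ K + Σ̃ᵀRΣ̃ / ∫∫ K g²`, where `v = ∫∫ K ω`.
The inner integrals of `g⁰, g¹, g²` over `[t - θ - h, t]` are polynomials of degree at most three
in `θ`, so the three weights are combinations of the moments `K₀, …, K₃`: they equal `K_{1h}`,
`0` and `K̃₁ / 6`, so Bessel's inequality even gives the bound with `6 / K̃₁` in place of `1 / K̃₁`.
-/

open MeasureTheory Matrix Set

theorem Matrix.IsSymm.dotProduct_mulVec_comm {ι : Type*} [Fintype ι] {R : Matrix ι ι ℝ}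
    (hR : R.IsSymm) (x y : ι → ℝ) : x ⬝ᵥ R *ᵥ y = y ⬝ᵥ R *ᵥ x := by
  rw [dotProduct_mulVec, dotProduct_comm, ← mulVec_transpose, hR.eq]

theorem Matrix.IsSymm.mul_dotProduct_mulVec_sub_sub_smul {ι : Type*} [Fintype ι]
    {R : Matrix ι ι ℝ} (hR : R.IsSymm) (w g : ℝ) (f α β : ι → ℝ) :
    w * ((f - α - g • β) ⬝ᵥ R *ᵥ (f - α - g • β)) =
      w * (f ⬝ᵥ R *ᵥ f) - 2 * ((R *ᵥ α) ⬝ᵥ w • f) - 2 * ((R *ᵥ β) ⬝ᵥ (w * g) • f) +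
        (α ⬝ᵥ R *ᵥ α) * w + (2 * (α ⬝ᵥ R *ᵥ β)) * (w * g) + (β ⬝ᵥ R *ᵥ β) * (w * g ^ 2) := by
  simp only [mulVec_sub, mulVec_smul, dotProduct_sub, sub_dotProduct, dotProduct_smul,
    smul_dotProduct, smul_eq_mul]
  rw [hR.dotProduct_mulVec_comm α f, hR.dotProduct_mulVec_comm β f,
    hR.dotProduct_mulVec_comm β α, dotProduct_comm (R *ᵥ α), dotProduct_comm (R *ᵥ β)]
  ring

namespace MeasureTheory

variable {X Y E F : Type*} [MeasurableSpace X] [MeasurableSpace Y]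
  [NormedAddCommGroup E] [NormedSpace ℝ E] [NormedAddCommGroup F] [NormedSpace ℝ F]
  {μ : Measure X} {ν : X → Measure Y} {Φ Ψ : X → Y → E}

/-- What is needed to treat `∫ x, ∫ y, Φ x y ∂ν x ∂μ` as a linear functional of `Φ`: weaker than
integrability on a product, and the inner measure may depend on `x`. -/
def IteratedIntegrable (μ : Measure X) (ν : X → Measure Y) (Φ : X → Y → E) : Prop :=
  (∀ᵐ x ∂μ, Integrable (Φ x) (ν x)) ∧ Integrable (fun x => ∫ y, Φ x y ∂ν x) μ

noncomputable def iteratedIntegral (μ : Measure X) (ν : X → Measure Y) (Φ : X → Y → E) : E :=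
  ∫ x, ∫ y, Φ x y ∂ν x ∂μ

namespace IteratedIntegrable

theorem add (hΦ : IteratedIntegrable μ ν Φ) (hΨ : IteratedIntegrable μ ν Ψ) :
    IteratedIntegrable μ ν fun x y => Φ x y + Ψ x y := by
  refine ⟨by filter_upwards [hΦ.1, hΨ.1] with x h₁ h₂ using h₁.add h₂, ?_⟩
  refine (hΦ.2.add hΨ.2).congr ?_
  filter_upwards [hΦ.1, hΨ.1] with x h₁ h₂ using (integral_add h₁ h₂).symm

theorem sub (hΦ : IteratedIntegrable μ ν Φ) (hΨ : IteratedIntegrable μ ν Ψ) :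
    IteratedIntegrable μ ν fun x y => Φ x y - Ψ x y := by
  refine ⟨by filter_upwards [hΦ.1, hΨ.1] with x h₁ h₂ using h₁.sub h₂, ?_⟩
  refine (hΦ.2.sub hΨ.2).congr ?_
  filter_upwards [hΦ.1, hΨ.1] with x h₁ h₂ using (integral_sub h₁ h₂).symm

theorem clm_comp [CompleteSpace E] [CompleteSpace F] (L : E →L[ℝ] F)
    (hΦ : IteratedIntegrable μ ν Φ) :
    IteratedIntegrable μ ν fun x y => L (Φ x y) := by
  refine ⟨by filter_upwards [hΦ.1] with x h using L.integrable_comp h, ?_⟩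
  refine (L.integrable_comp hΦ.2).congr ?_
  filter_upwards [hΦ.1] with x h using (L.integral_comp_comm h).symm

theorem const_mul {Φ : X → Y → ℝ} (hΦ : IteratedIntegrable μ ν Φ) (c : ℝ) :
    IteratedIntegrable μ ν fun x y => c * Φ x y :=
  hΦ.clm_comp (c • ContinuousLinearMap.id ℝ ℝ)

theorem dotProduct {ι : Type*} [Fintype ι] {Φ : X → Y → ι → ℝ}
    (hΦ : IteratedIntegrable μ ν Φ) (u : ι → ℝ) :
    IteratedIntegrable μ ν fun x y => u ⬝ᵥ Φ x y :=
  hΦ.clm_comp (LinearMap.toContinuousLinearMap (dotProductBilin ℝ ℝ u))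

end IteratedIntegrable

theorem iteratedIntegral_add (hΦ : IteratedIntegrable μ ν Φ) (hΨ : IteratedIntegrable μ ν Ψ) :
    iteratedIntegral μ ν (fun x y => Φ x y + Ψ x y) =
      iteratedIntegral μ ν Φ + iteratedIntegral μ ν Ψ := by
  rw [iteratedIntegral, iteratedIntegral, iteratedIntegral, ← integral_add hΦ.2 hΨ.2]
  refine integral_congr_ae ?_
  filter_upwards [hΦ.1, hΨ.1] with x h₁ h₂ using integral_add h₁ h₂

theorem iteratedIntegral_sub (hΦ : IteratedIntegrable μ ν Φ) (hΨ : IteratedIntegrable μ ν Ψ) :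
    iteratedIntegral μ ν (fun x y => Φ x y - Ψ x y) =
      iteratedIntegral μ ν Φ - iteratedIntegral μ ν Ψ := by
  rw [iteratedIntegral, iteratedIntegral, iteratedIntegral, ← integral_sub hΦ.2 hΨ.2]
  refine integral_congr_ae ?_
  filter_upwards [hΦ.1, hΨ.1] with x h₁ h₂ using integral_sub h₁ h₂

theorem iteratedIntegral_clm_comp [CompleteSpace E] [CompleteSpace F] (L : E →L[ℝ] F)
    (hΦ : IteratedIntegrable μ ν Φ) :
    iteratedIntegral μ ν (fun x y => L (Φ x y)) = L (iteratedIntegral μ ν Φ) := by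
  rw [iteratedIntegral, iteratedIntegral, ← L.integral_comp_comm hΦ.2]
  refine integral_congr_ae ?_
  filter_upwards [hΦ.1] with x h using L.integral_comp_comm h

theorem iteratedIntegral_const_mul (Φ : X → Y → ℝ) (c : ℝ) :
    iteratedIntegral μ ν (fun x y => c * Φ x y) = c * iteratedIntegral μ ν Φ := by
  simp only [iteratedIntegral, integral_const_mul]

theorem iteratedIntegral_dotProduct {ι : Type*} [Fintype ι] {Φ : X → Y → ι → ℝ}
    (hΦ : IteratedIntegrable μ ν Φ) (u : ι → ℝ) :
    iteratedIntegral μ ν (fun x y => u ⬝ᵥ Φ x y) = u ⬝ᵥ iteratedIntegral μ ν Φ :=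
  iteratedIntegral_clm_comp (LinearMap.toContinuousLinearMap (dotProductBilin ℝ ℝ u)) hΦ

theorem iteratedIntegral_nonneg {Φ : X → Y → ℝ} (hΦ : ∀ᵐ x ∂μ, ∀ᵐ y ∂ν x, 0 ≤ Φ x y) :
    0 ≤ iteratedIntegral μ ν Φ :=
  integral_nonneg_of_ae (hΦ.mono fun _ hx => integral_nonneg_of_ae hx)

variable {ι : Type*} [Fintype ι] {R : Matrix ι ι ℝ} {w : X → ℝ} {f : Y → ι → ℝ} {g : Y → ℝ}

theorem bessel_le_iteratedIntegral_dotProduct_mulVec (hR : R.PosSemidef)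
    (hw : ∀ᵐ x ∂μ, 0 ≤ w x)
    (hf : IteratedIntegrable μ ν fun x y => w x • f y)
    (hgf : IteratedIntegrable μ ν fun x y => (w x * g y) • f y)
    (hfRf : IteratedIntegrable μ ν fun x y => w x * (f y ⬝ᵥ R *ᵥ f y))
    (h₀ : IteratedIntegrable μ ν fun x _ => w x)
    (h₁ : IteratedIntegrable μ ν fun x y => w x * g y)
    (h₂ : IteratedIntegrable μ ν fun x y => w x * g y ^ 2)
    (horth : iteratedIntegral μ ν (fun x y => w x * g y) = 0) :
    (iteratedIntegral μ ν fun x _ => w x)⁻¹ *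
          ((iteratedIntegral μ ν fun x y => w x • f y) ⬝ᵥ
            R *ᵥ iteratedIntegral μ ν fun x y => w x • f y) +
        (iteratedIntegral μ ν fun x y => w x * g y ^ 2)⁻¹ *
          ((iteratedIntegral μ ν fun x y => (w x * g y) • f y) ⬝ᵥ
            R *ᵥ iteratedIntegral μ ν fun x y => (w x * g y) • f y) ≤
      iteratedIntegral μ ν fun x y => w x * (f y ⬝ᵥ R *ᵥ f y) := by
  set v := iteratedIntegral μ ν fun x y => w x • f y
  set S := iteratedIntegral μ ν fun x y => (w x * g y) • f y
  set m₀ := iteratedIntegral μ ν fun x _ => w x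
  set m₂ := iteratedIntegral μ ν fun x y => w x * g y ^ 2
  set α := m₀⁻¹ • v
  set β := m₂⁻¹ • S
  have hsymm : R.IsSymm := isHermitian_iff_isSymm.mp hR.isHermitian
  have hnonneg : 0 ≤ iteratedIntegral μ ν fun x y =>
      w x * ((f y - α - g y • β) ⬝ᵥ R *ᵥ (f y - α - g y • β)) := by
    refine iteratedIntegral_nonneg (hw.mono fun x hx => ae_of_all _ fun y => ?_)
    simpa using mul_nonneg hx (hR.dotProduct_mulVec_nonneg (f y - α - g y • β))
  have hA := (hf.dotProduct (R *ᵥ α)).const_mul 2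
  have hB := (hgf.dotProduct (R *ᵥ β)).const_mul 2
  have hW₀ := h₀.const_mul (α ⬝ᵥ R *ᵥ α)
  have hW₁ := h₁.const_mul (2 * (α ⬝ᵥ R *ᵥ β))
  have hW₂ := h₂.const_mul (β ⬝ᵥ R *ᵥ β)
  simp_rw [hsymm.mul_dotProduct_mulVec_sub_sub_smul] at hnonneg
  rw [iteratedIntegral_add ((((hfRf.sub hA).sub hB).add hW₀).add hW₁) hW₂,
    iteratedIntegral_add (((hfRf.sub hA).sub hB).add hW₀) hW₁,
    iteratedIntegral_add ((hfRf.sub hA).sub hB) hW₀, iteratedIntegral_sub (hfRf.sub hA) hB,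
    iteratedIntegral_sub hfRf hA, iteratedIntegral_const_mul, iteratedIntegral_const_mul,
    iteratedIntegral_const_mul, iteratedIntegral_const_mul, iteratedIntegral_const_mul,
    iteratedIntegral_dotProduct hf, iteratedIntegral_dotProduct hgf, horth] at hnonneg
  simp only [α, β, mulVec_smul, dotProduct_smul, smul_dotProduct, smul_eq_mul] at hnonneg
  -- `0⁻¹ = 0` makes this true for `m = 0` as well.
  have hinv (m q : ℝ) : m⁻¹ * (m⁻¹ * q) * m = m⁻¹ * q := by
    rcases eq_or_ne m 0 with rfl | hm
    · simp
    · field_simp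
  rw [hinv, hinv, dotProduct_comm (R *ᵥ v), dotProduct_comm (R *ᵥ S)] at hnonneg
  linarith

end MeasureTheory

theorem cubic_mul_eq_add {K : ℝ → ℝ} (a₀ a₁ a₂ a₃ : ℝ) :
    (fun s => (a₀ + a₁ * s + a₂ * s ^ 2 + a₃ * s ^ 3) * K s) =
      (fun s => a₀ * K s) + (fun s => a₁ * (s * K s)) + (fun s => a₂ * (s ^ 2 * K s)) +
        fun s => a₃ * (s ^ 3 * K s) := by
  ext s
  simp only [Pi.add_apply]
  ring

theorem integrable_cubic_mul {μ : Measure ℝ} {K : ℝ → ℝ} (h₀ : Integrable K μ)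
    (h₁ : Integrable (fun s => s * K s) μ) (h₂ : Integrable (fun s => s ^ 2 * K s) μ)
    (h₃ : Integrable (fun s => s ^ 3 * K s) μ) (a₀ a₁ a₂ a₃ : ℝ) :
    Integrable (fun s => (a₀ + a₁ * s + a₂ * s ^ 2 + a₃ * s ^ 3) * K s) μ := by
  rw [cubic_mul_eq_add]
  exact (((h₀.const_mul a₀).add (h₁.const_mul a₁)).add (h₂.const_mul a₂)).add (h₃.const_mul a₃)

theorem integral_cubic_mul {μ : Measure ℝ} {K : ℝ → ℝ} (h₀ : Integrable K μ)
    (h₁ : Integrable (fun s => s * K s) μ) (h₂ : Integrable (fun s => s ^ 2 * K s) μ)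
    (h₃ : Integrable (fun s => s ^ 3 * K s) μ) (a₀ a₁ a₂ a₃ : ℝ) :
    ∫ s, (a₀ + a₁ * s + a₂ * s ^ 2 + a₃ * s ^ 3) * K s ∂μ =
      a₀ * ∫ s, K s ∂μ + a₁ * ∫ s, s * K s ∂μ + a₂ * ∫ s, s ^ 2 * K s ∂μ +
        a₃ * ∫ s, s ^ 3 * K s ∂μ := by
  rw [cubic_mul_eq_add,
    integral_add' (((h₀.const_mul a₀).add (h₁.const_mul a₁)).add (h₂.const_mul a₂))
      (h₃.const_mul a₃),
    integral_add' ((h₀.const_mul a₀).add (h₁.const_mul a₁)) (h₂.const_mul a₂),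
    integral_add' (h₀.const_mul a₀) (h₁.const_mul a₁)]
  simp only [integral_const_mul]

theorem integral_Icc_neg_add_sub_pow {a b : ℝ} (hab : a ≤ b) (c : ℝ) (k : ℕ) :
    ∫ s in Icc a b, (-s + b - c) ^ k = ((b - a - c) ^ (k + 1) - (-c) ^ (k + 1)) / (k + 1) := by
  rw [integral_Icc_eq_integral_Ioc, ← intervalIntegral.integral_of_le hab]
  simp_rw [show ∀ s : ℝ, -s + b - c = b - c - s from fun s => by ring]
  rw [intervalIntegral.integral_comp_sub_left (fun u => u ^ k), integral_pow]
  ring_nf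

theorem window_mul_pow_iteratedIntegrable_and_eq {K : ℝ → ℝ} {t h c : ℝ} (hh : 0 ≤ h)
    (h₀ : IntegrableOn K (Ici 0)) (h₁ : IntegrableOn (fun s => s * K s) (Ici 0))
    (h₂ : IntegrableOn (fun s => s ^ 2 * K s) (Ici 0))
    (h₃ : IntegrableOn (fun s => s ^ 3 * K s) (Ici 0))
    (k : ℕ) (a₀ a₁ a₂ a₃ : ℝ) (hp : ∀ θ, ((θ + h - c) ^ (k + 1) - (-c) ^ (k + 1)) / (k + 1) =
      a₀ + a₁ * θ + a₂ * θ ^ 2 + a₃ * θ ^ 3) :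
    IteratedIntegrable (volume.restrict (Ici 0)) (fun θ => volume.restrict (Icc (t - θ - h) t))
        (fun θ s => K θ * (-s + t - c) ^ k) ∧
      iteratedIntegral (volume.restrict (Ici 0)) (fun θ => volume.restrict (Icc (t - θ - h) t))
          (fun θ s => K θ * (-s + t - c) ^ k) =
        a₀ * (∫ θ in Ici 0, K θ) + a₁ * (∫ θ in Ici 0, θ * K θ) +
          a₂ * (∫ θ in Ici 0, θ ^ 2 * K θ) + a₃ * ∫ θ in Ici 0, θ ^ 3 * K θ := by
  have hinner : ∀ θ ∈ Ici (0 : ℝ), ∫ s in Icc (t - θ - h) t, K θ * (-s + t - c) ^ k =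
      (a₀ + a₁ * θ + a₂ * θ ^ 2 + a₃ * θ ^ 3) * K θ := fun θ hθ => by
    rw [integral_const_mul, integral_Icc_neg_add_sub_pow (by linarith [mem_Ici.mp hθ]), ← hp]
    ring_nf
  refine ⟨⟨ae_of_all _ fun θ => (by fun_prop : Continuous _).integrableOn_Icc, ?_⟩, ?_⟩
  · exact (integrable_cubic_mul h₀ h₁ h₂ h₃ a₀ a₁ a₂ a₃).congr
      ((ae_restrict_iff' measurableSet_Ici).mpr (ae_of_all _ fun θ hθ => (hinner θ hθ).symm))
  · rw [iteratedIntegral, setIntegral_congr_fun measurableSet_Ici hinner]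
    exact integral_cubic_mul h₀ h₁ h₂ h₃ a₀ a₁ a₂ a₃

theorem first_window_moment_eq_zero {h K0 K1 K2 c : ℝ} (hK1h : h * K0 + K1 ≠ 0)
    (hc : c = (h * (h * K0 + K1) + h * K1 + K2) / (2 * (h * K0 + K1))) :
    (h ^ 2 / 2 - c * h) * K0 + (h - c) * K1 + 1 / 2 * K2 = 0 := by
  rw [hc]
  field_simp
  ring

theorem second_window_moment_eq {h K0 K1 K2 K3 c : ℝ} (hK1h : h * K0 + K1 ≠ 0)
    (hc : c = (h * (h * K0 + K1) + h * K1 + K2) / (2 * (h * K0 + K1))) :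
    ((h - c) ^ 3 + c ^ 3) / 3 * K0 + (h - c) ^ 2 * K1 + (h - c) * K2 + 1 / 3 * K3 =
      ((h ^ 3 / 2) * K0 + 2 * K3 +
        (3 * h ^ 2 * K0 * (h * K1 + 2 * K2) - 3 * K2 ^ 2) / (2 * (h * K0 + K1))) / 6 := by
  rw [hc]
  field_simp
  ring

theorem extended_jensen_double_integral_moments_general {n : ℕ}
    (R : Matrix (Fin n) (Fin n) ℝ) (hRpd : R.PosDef)
    (t h : ℝ) (hh : 0 ≤ h)
    (K : ℝ → ℝ) (ω : ℝ → (Fin n → ℝ))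
    (hKnonneg : ∀ θ ∈ Set.Ici (0 : ℝ), 0 ≤ K θ)
    -- finiteness of the moments of K
    (hK : IntegrableOn K (Set.Ici (0 : ℝ)))
    (hsK : IntegrableOn (fun s => s * K s) (Set.Ici (0 : ℝ)))
    (hs2K : IntegrableOn (fun s => s ^ 2 * K s) (Set.Ici (0 : ℝ)))
    (hs3K : IntegrableOn (fun s => s ^ 3 * K s) (Set.Ici (0 : ℝ)))
    (K0 K1 K2 K3 : ℝ)
    (hK0 : K0 = ∫ s in Set.Ici (0 : ℝ), K s)
    (hK1 : K1 = ∫ s in Set.Ici (0 : ℝ), s * K s)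
    (hK2 : K2 = ∫ s in Set.Ici (0 : ℝ), s ^ 2 * K s)
    (hK3 : K3 = ∫ s in Set.Ici (0 : ℝ), s ^ 3 * K s)
    (K1h : ℝ) (hK1h : K1h = h * K0 + K1) (hK1hpos : 0 < K1h)
    (Ktilde : ℝ)
    (hKtilde : Ktilde = (h ^ 3 / 2) * K0 + 2 * K3 +
      (3 * h ^ 2 * K0 * (h * K1 + 2 * K2) - 3 * K2 ^ 2) / (2 * K1h))
    (hKtildepos : 0 < Ktilde)
    -- inner integrability on [t-θ-h, t] for every θ ≥ 0
    (hKω_in : ∀ θ ∈ Set.Ici (0 : ℝ),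
      IntegrableOn (fun s => K θ • ω s) (Set.Icc (t - θ - h) t))
    (hKgω_in : ∀ θ ∈ Set.Ici (0 : ℝ),
      IntegrableOn
        (fun s => (K θ * (-s + t - (h * K1h + h * K1 + K2) / (2 * K1h))) • ω s)
        (Set.Icc (t - θ - h) t))
    (hKωRω_in : ∀ θ ∈ Set.Ici (0 : ℝ),
      IntegrableOn (fun s => K θ * (ω s ⬝ᵥ R.mulVec (ω s))) (Set.Icc (t - θ - h) t))
    -- outer integrability on [0,∞)
    (hKω_out : IntegrableOn
      (fun θ => ∫ s in Set.Icc (t - θ - h) t, K θ • ω s) (Set.Ici (0 : ℝ)))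
    (hKgω_out : IntegrableOn
      (fun θ => ∫ s in Set.Icc (t - θ - h) t,
        (K θ * (-s + t - (h * K1h + h * K1 + K2) / (2 * K1h))) • ω s)
      (Set.Ici (0 : ℝ)))
    (hKωRω_out : IntegrableOn
      (fun θ => ∫ s in Set.Icc (t - θ - h) t, K θ * (ω s ⬝ᵥ R.mulVec (ω s)))
      (Set.Ici (0 : ℝ)))
    (Sig : Fin n → ℝ)
    (hSig : Sig = ∫ θ in Set.Ici (0 : ℝ), ∫ s in Set.Icc (t - θ - h) t,
      (K θ * (-s + t - (h * K1h + h * K1 + K2) / (2 * K1h))) • ω s) :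
    ∫ θ in Set.Ici (0 : ℝ), ∫ s in Set.Icc (t - θ - h) t,
        K θ * (ω s ⬝ᵥ R.mulVec (ω s)) ≥
      K1h⁻¹ *
        ((∫ θ in Set.Ici (0 : ℝ), ∫ s in Set.Icc (t - θ - h) t, K θ • ω s) ⬝ᵥ
          R.mulVec
            (∫ θ in Set.Ici (0 : ℝ), ∫ s in Set.Icc (t - θ - h) t, K θ • ω s)) +
      Ktilde⁻¹ * (Sig ⬝ᵥ R.mulVec Sig) := by
  subst hK1h
  set c := (h * (h * K0 + K1) + h * K1 + K2) / (2 * (h * K0 + K1)) with hc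
  have hK1h₀ : h * K0 + K1 ≠ 0 := hK1hpos.ne'
  obtain ⟨hw₀, hm₀⟩ := window_mul_pow_iteratedIntegrable_and_eq (t := t) (c := c) hh
    hK hsK hs2K hs3K 0 h 1 0 0 fun θ => by push_cast; ring
  obtain ⟨hw₁, hm₁⟩ := window_mul_pow_iteratedIntegrable_and_eq (t := t) (c := c) hh
    hK hsK hs2K hs3K 1 (h ^ 2 / 2 - c * h) (h - c) (1 / 2) 0 fun θ => by push_cast; ring
  obtain ⟨hw₂, hm₂⟩ := window_mul_pow_iteratedIntegrable_and_eq (t := t) (c := c) hh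
    hK hsK hs2K hs3K 2 (((h - c) ^ 3 + c ^ 3) / 3) ((h - c) ^ 2) (h - c) (1 / 3)
    fun θ => by push_cast; ring
  simp only [pow_zero, mul_one, pow_one, one_mul, zero_mul, add_zero] at hw₀ hm₀ hw₁ hm₁
  simp only [← hK0, ← hK1, ← hK2, ← hK3] at hm₀ hm₁ hm₂
  have hbessel := bessel_le_iteratedIntegral_dotProduct_mulVec hRpd.posSemidef
    (ae_restrict_of_forall_mem measurableSet_Ici hKnonneg)
    ⟨ae_restrict_of_forall_mem measurableSet_Ici hKω_in, hKω_out⟩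
    ⟨ae_restrict_of_forall_mem measurableSet_Ici hKgω_in, hKgω_out⟩
    ⟨ae_restrict_of_forall_mem measurableSet_Ici hKωRω_in, hKωRω_out⟩
    hw₀ hw₁ hw₂ (hm₁.trans (first_window_moment_eq_zero hK1h₀ hc))
  rw [hm₀, hm₂, second_window_moment_eq hK1h₀ hc, ← hKtilde] at hbessel
  unfold iteratedIntegral at hbessel
  rw [← hSig] at hbessel
  have hSig_nonneg : 0 ≤ Sig ⬝ᵥ R *ᵥ Sig := by
    simpa using hRpd.posSemidef.dotProduct_mulVec_nonneg Sig
  have hsharp : Ktilde⁻¹ * (Sig ⬝ᵥ R *ᵥ Sig) ≤ (Ktilde / 6)⁻¹ * (Sig ⬝ᵥ R *ᵥ Sig) := by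
    gcongr
    linarith
  linarith

/-- Corollary 2: double-integral Jensen inequality over an infinite horizon with
the explicit auxiliary function `g(s) = -s + t - (hK_{1h}+hK₁+K₂)/(2K_{1h})`. -/
theorem extended_jensen_double_integral_moments {n : ℕ}
    (R : Matrix (Fin n) (Fin n) ℝ) (hRsym : R.IsSymm) (hRpd : R.PosDef)
    (t h : ℝ) (hh : 0 ≤ h)
    (K : ℝ → ℝ) (ω : ℝ → (Fin n → ℝ))
    (hKnonneg : ∀ θ ∈ Set.Ici (0 : ℝ), 0 ≤ K θ)
    -- finiteness of the moments of K
    (hK : IntegrableOn K (Set.Ici (0 : ℝ)))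
    (hsK : IntegrableOn (fun s => s * K s) (Set.Ici (0 : ℝ)))
    (hs2K : IntegrableOn (fun s => s ^ 2 * K s) (Set.Ici (0 : ℝ)))
    (hs3K : IntegrableOn (fun s => s ^ 3 * K s) (Set.Ici (0 : ℝ)))
    (K0 K1 K2 K3 : ℝ)
    (hK0 : K0 = ∫ s in Set.Ici (0 : ℝ), K s)
    (hK1 : K1 = ∫ s in Set.Ici (0 : ℝ), s * K s)
    (hK2 : K2 = ∫ s in Set.Ici (0 : ℝ), s ^ 2 * K s)
    (hK3 : K3 = ∫ s in Set.Ici (0 : ℝ), s ^ 3 * K s)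
    (K1h : ℝ) (hK1h : K1h = h * K0 + K1) (hK1hpos : 0 < K1h)
    (Ktilde : ℝ)
    (hKtilde : Ktilde = (h ^ 3 / 2) * K0 + 2 * K3 +
      (3 * h ^ 2 * K0 * (h * K1 + 2 * K2) - 3 * K2 ^ 2) / (2 * K1h))
    (hKtildepos : 0 < Ktilde)
    -- inner integrability on [t-θ-h, t] for every θ ≥ 0
    (hKω_in : ∀ θ ∈ Set.Ici (0 : ℝ),
      IntegrableOn (fun s => K θ • ω s) (Set.Icc (t - θ - h) t))
    (hKgω_in : ∀ θ ∈ Set.Ici (0 : ℝ),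
      IntegrableOn
        (fun s => (K θ * (-s + t - (h * K1h + h * K1 + K2) / (2 * K1h))) • ω s)
        (Set.Icc (t - θ - h) t))
    (hKωRω_in : ∀ θ ∈ Set.Ici (0 : ℝ),
      IntegrableOn (fun s => K θ * (ω s ⬝ᵥ R.mulVec (ω s))) (Set.Icc (t - θ - h) t))
    -- outer integrability on [0,∞)
    (hKω_out : IntegrableOn
      (fun θ => ∫ s in Set.Icc (t - θ - h) t, K θ • ω s) (Set.Ici (0 : ℝ)))
    (hKgω_out : IntegrableOn
      (fun θ => ∫ s in Set.Icc (t - θ - h) t,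
        (K θ * (-s + t - (h * K1h + h * K1 + K2) / (2 * K1h))) • ω s)
      (Set.Ici (0 : ℝ)))
    (hKωRω_out : IntegrableOn
      (fun θ => ∫ s in Set.Icc (t - θ - h) t, K θ * (ω s ⬝ᵥ R.mulVec (ω s)))
      (Set.Ici (0 : ℝ)))
    (Sig : Fin n → ℝ)
    (hSig : Sig = ∫ θ in Set.Ici (0 : ℝ), ∫ s in Set.Icc (t - θ - h) t,
      (K θ * (-s + t - (h * K1h + h * K1 + K2) / (2 * K1h))) • ω s) :
    ∫ θ in Set.Ici (0 : ℝ), ∫ s in Set.Icc (t - θ - h) t,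
        K θ * (ω s ⬝ᵥ R.mulVec (ω s)) ≥
      K1h⁻¹ *
        ((∫ θ in Set.Ici (0 : ℝ), ∫ s in Set.Icc (t - θ - h) t, K θ • ω s) ⬝ᵥ
          R.mulVec
            (∫ θ in Set.Ici (0 : ℝ), ∫ s in Set.Icc (t - θ - h) t, K θ • ω s)) +
      Ktilde⁻¹ * (Sig ⬝ᵥ R.mulVec Sig) :=
  extended_jensen_double_integral_moments_general R hRpd t h hh K ω hKnonneg hK hsK hs2K hs3K K0 K1
    K2 K3 hK0 hK1 hK2 hK3 K1h hK1h hK1hpos Ktilde hKtilde hKtildepos hKω_in hKgω_in hKωRω_in hKω_out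
    hKgω_out hKωRω_out Sig hSig
end

section
/- Let R be an n×n real symmetric positive definite matrix, M : ℕ → ℝ a nonnegative function, x : ℤ → ℝⁿ a function, k ∈ ℤ and h ∈ ℕ, such that the double series ∑_{i=0}^∞ ∑_{j=k−i−h}^{k−1} M(i) x(j)ᵀRx(j) and ∑_{i=0}^∞ ∑_{j=k−i−h}^{k−1} M(i) x(j) are (absolutely) convergent and M_{1h} := ∑_{i=0}^∞ (i+h) M(i) is finite and positive. Then ∑_{i=0}^∞ ∑_{j=k−i−h}^{k−1} M(i) x(j)ᵀ R x(j) ≥ M_{1h}⁻¹ (∑_{i=0}^∞ ∑_{j=k−i−h}^{k−1} M(i)x(j))ᵀ R (∑_{i=0}^∞ ∑_{j=k−i−h}^{k−1} M(i)x(j)). -/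
open Matrix

private lemma dotq_nonneg {n : ℕ} {R : Matrix (Fin n) (Fin n) ℝ} (hRpd : R.PosDef)
    (v : Fin n → ℝ) : 0 ≤ v ⬝ᵥ R.mulVec v := by
  have := hRpd.posSemidef.re_dotProduct_nonneg v
  simpa using this

private lemma dotq_symm {n : ℕ} {R : Matrix (Fin n) (Fin n) ℝ} (hRsym : R.IsSymm)
    (a b : Fin n → ℝ) : a ⬝ᵥ R.mulVec b = b ⬝ᵥ R.mulVec a := by
  rw [Matrix.dotProduct_mulVec, ← Matrix.vecMul_transpose, hRsym.eq, dotProduct_comm]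

private lemma dot_sum_left {n : ℕ} {ι : Type*} (s : Finset ι) (f : ι → Fin n → ℝ)
    (b : Fin n → ℝ) : (∑ t ∈ s, f t) ⬝ᵥ b = ∑ t ∈ s, f t ⬝ᵥ b := by
  simp only [dotProduct, Finset.sum_apply, Finset.sum_mul]
  exact Finset.sum_comm

private lemma dot_sum_right {n : ℕ} {ι : Type*} (s : Finset ι) (a : Fin n → ℝ)
    (f : ι → Fin n → ℝ) : a ⬝ᵥ (∑ t ∈ s, f t) = ∑ t ∈ s, a ⬝ᵥ f t := by
  simp only [dotProduct, Finset.sum_apply, Finset.mul_sum]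
  exact Finset.sum_comm

/-- Weighted Cauchy–Schwarz / Jensen inequality for the quadratic form of a
symmetric positive definite matrix, finite version. -/
private lemma finite_jensen {n : ℕ} {R : Matrix (Fin n) (Fin n) ℝ} (hRsym : R.IsSymm)
    (hRpd : R.PosDef) {ι : Type*} (s : Finset ι) (w : ι → ℝ) (hw : ∀ t, 0 ≤ w t)
    (u : ι → Fin n → ℝ) :
    (∑ t ∈ s, w t • u t) ⬝ᵥ R.mulVec (∑ t ∈ s, w t • u t) ≤
      (∑ t ∈ s, w t) * ∑ t ∈ s, w t * (u t ⬝ᵥ R.mulVec (u t)) := by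
  set q : ι → ℝ := fun t => u t ⬝ᵥ R.mulVec (u t) with hq
  -- pairwise Cauchy-Schwarz bound
  have cs2 : ∀ a b : Fin n → ℝ, a ⬝ᵥ R.mulVec b ≤
      ((a ⬝ᵥ R.mulVec a) + (b ⬝ᵥ R.mulVec b)) / 2 := by
    intro a b
    have h0 := dotq_nonneg hRpd (a - b)
    have hexp : (a - b) ⬝ᵥ R.mulVec (a - b) =
        a ⬝ᵥ R.mulVec a - a ⬝ᵥ R.mulVec b - b ⬝ᵥ R.mulVec a + b ⬝ᵥ R.mulVec b := by
      simp only [Matrix.mulVec_sub, sub_dotProduct, dotProduct_sub]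
      ring
    have hsym := dotq_symm hRsym a b
    rw [hexp] at h0
    linarith
  -- expand the quadratic form of the sum
  have expand : (∑ t ∈ s, w t • u t) ⬝ᵥ R.mulVec (∑ t ∈ s, w t • u t) =
      ∑ t ∈ s, ∑ r ∈ s, (w t * w r) * (u t ⬝ᵥ R.mulVec (u r)) := by
    have hms : R.mulVec (∑ t ∈ s, w t • u t) = ∑ t ∈ s, w t • R.mulVec (u t) := by
      rw [show R.mulVec (∑ t ∈ s, w t • u t) = R.mulVecLin (∑ t ∈ s, w t • u t) from rfl,
        map_sum]
      exact Finset.sum_congr rfl fun t _ => by rw [_root_.map_smul]; rfl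
    rw [hms, dot_sum_left]
    refine Finset.sum_congr rfl fun t _ => ?_
    rw [dot_sum_right]
    refine Finset.sum_congr rfl fun r _ => ?_
    rw [smul_dotProduct, dotProduct_smul]
    simp [smul_eq_mul]; ring
  rw [expand]
  have step : ∑ t ∈ s, ∑ r ∈ s, (w t * w r) * (u t ⬝ᵥ R.mulVec (u r)) ≤
      ∑ t ∈ s, ∑ r ∈ s, (w t * w r) * ((q t + q r) / 2) := by
    refine Finset.sum_le_sum fun t _ => Finset.sum_le_sum fun r _ => ?_
    exact mul_le_mul_of_nonneg_left (cs2 (u t) (u r)) (mul_nonneg (hw t) (hw r))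
  refine step.trans (le_of_eq ?_)
  have eA : ∑ t ∈ s, ∑ r ∈ s, w t * w r * q t = (∑ t ∈ s, w t * q t) * (∑ r ∈ s, w r) := by
    rw [Finset.sum_mul]
    refine Finset.sum_congr rfl fun t _ => ?_
    rw [Finset.mul_sum]
    exact Finset.sum_congr rfl fun r _ => by ring
  have eB : ∑ t ∈ s, ∑ r ∈ s, w t * w r * q r = (∑ t ∈ s, w t) * (∑ r ∈ s, w r * q r) := by
    rw [Finset.sum_mul]
    refine Finset.sum_congr rfl fun t _ => ?_
    rw [Finset.mul_sum]
    exact Finset.sum_congr rfl fun r _ => by ring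
  have e : ∀ t r : ι, w t * w r * ((q t + q r) / 2) =
      (w t * w r * q t) / 2 + (w t * w r * q r) / 2 := fun t r => by ring
  simp_rw [e, Finset.sum_add_distrib, ← Finset.sum_div]
  rw [eA, eB]
  ring

/-- Double-summation Jensen inequality with infinite sequences (inequality (29)).
The inner sum runs over the integers `j` with `k - i - h ≤ j ≤ k - 1`. -/
theorem jensen_double_summation_infinite {n : ℕ}
    (R : Matrix (Fin n) (Fin n) ℝ) (hRsym : R.IsSymm) (hRpd : R.PosDef)
    (M : ℕ → ℝ) (x : ℤ → (Fin n → ℝ)) (k : ℤ) (h : ℕ)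
    (hMnonneg : ∀ i, 0 ≤ M i)
    (hMxRx : Summable (fun i : ℕ =>
      ∑ j ∈ Finset.Icc (k - (i : ℤ) - (h : ℤ)) (k - 1),
        M i * (x j ⬝ᵥ R.mulVec (x j))))
    (hMx : Summable (fun i : ℕ =>
      ∑ j ∈ Finset.Icc (k - (i : ℤ) - (h : ℤ)) (k - 1), M i • x j))
    (hM1h : Summable (fun i : ℕ => ((i : ℝ) + (h : ℝ)) * M i))
    (hM1hpos : 0 < ∑' i : ℕ, ((i : ℝ) + (h : ℝ)) * M i) :
    ∑' i : ℕ, ∑ j ∈ Finset.Icc (k - (i : ℤ) - (h : ℤ)) (k - 1),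
        M i * (x j ⬝ᵥ R.mulVec (x j)) ≥
      (∑' i : ℕ, ((i : ℝ) + (h : ℝ)) * M i)⁻¹ *
        ((∑' i : ℕ, ∑ j ∈ Finset.Icc (k - (i : ℤ) - (h : ℤ)) (k - 1), M i • x j) ⬝ᵥ
          R.mulVec
            (∑' i : ℕ, ∑ j ∈ Finset.Icc (k - (i : ℤ) - (h : ℤ)) (k - 1),
              M i • x j)) := by
  set a : ℕ → ℝ := fun i => ∑ j ∈ Finset.Icc (k - (i : ℤ) - (h : ℤ)) (k - 1),
      M i * (x j ⬝ᵥ R.mulVec (x j)) with ha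
  set b : ℕ → (Fin n → ℝ) := fun i => ∑ j ∈ Finset.Icc (k - (i : ℤ) - (h : ℤ)) (k - 1),
      M i • x j with hb
  set c : ℕ → ℝ := fun i => ((i : ℝ) + (h : ℝ)) * M i with hc
  set A : ℝ := ∑' i, a i
  set W : ℝ := ∑' i, c i
  set v : Fin n → ℝ := ∑' i, b i
  have hann : ∀ i, 0 ≤ a i := fun i =>
    Finset.sum_nonneg fun j _ => mul_nonneg (hMnonneg i) (dotq_nonneg hRpd (x j))
  have hcnn : ∀ i, 0 ≤ c i := fun i =>
    mul_nonneg (by positivity) (hMnonneg i)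
  -- the key finite bound
  have key : ∀ s : Finset ℕ, (∑ i ∈ s, b i) ⬝ᵥ R.mulVec (∑ i ∈ s, b i) ≤ W * A := by
    intro s
    -- flatten to the sigma type
    have hcard : ∀ i : ℕ, ((Finset.Icc (k - (i : ℤ) - (h : ℤ)) (k - 1)).card : ℝ)
        = (i : ℝ) + (h : ℝ) := by
      intro i
      rw [Int.card_Icc]
      have : (k - 1 + 1 - (k - (i : ℤ) - (h : ℤ))) = (i : ℤ) + (h : ℤ) := by ring
      rw [this]
      have h2 : ((i : ℤ) + (h : ℤ)).toNat = i + h := by omega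
      rw [h2]
      push_cast
      ring
    have hflat := finite_jensen hRsym hRpd
      (s.sigma fun i => Finset.Icc (k - (i : ℤ) - (h : ℤ)) (k - 1))
      (fun p : Σ _ : ℕ, ℤ => M p.1) (fun p => hMnonneg p.1) (fun p => x p.2)
    rw [Finset.sum_sigma, Finset.sum_sigma, Finset.sum_sigma] at hflat
    have e1 : ∑ i ∈ s, ∑ j ∈ Finset.Icc (k - (i : ℤ) - (h : ℤ)) (k - 1), M i = ∑ i ∈ s, c i := by
      refine Finset.sum_congr rfl fun i _ => ?_
      rw [Finset.sum_const, nsmul_eq_mul, hcard i]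
    rw [e1] at hflat
    refine le_trans hflat ?_
    have h2 : ∑ i ∈ s, c i ≤ W := Summable.sum_le_tsum s (fun i _ => hcnn i) hM1h
    have h3 : (∑ i ∈ s, ∑ j ∈ Finset.Icc (k - (i : ℤ) - (h : ℤ)) (k - 1),
        M i * (x (⟨i, j⟩ : Σ _ : ℕ, ℤ).2 ⬝ᵥ R.mulVec (x (⟨i, j⟩ : Σ _ : ℕ, ℤ).2))) ≤ A := by
      exact Summable.sum_le_tsum s (fun i _ => hann i) hMxRx
    refine mul_le_mul h2 h3 ?_ (le_of_lt hM1hpos)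
    exact Finset.sum_nonneg fun i _ => Finset.sum_nonneg fun j _ =>
      mul_nonneg (hMnonneg i) (dotq_nonneg hRpd (x j))
  -- pass to the limit
  have hcont : Continuous fun u : Fin n → ℝ => u ⬝ᵥ R.mulVec u := by
    simp only [dotProduct, Matrix.mulVec]
    fun_prop
  have hsum : HasSum b v := hMx.hasSum
  have htend : Filter.Tendsto (fun s : Finset ℕ => (∑ i ∈ s, b i) ⬝ᵥ R.mulVec (∑ i ∈ s, b i))
      Filter.atTop (nhds (v ⬝ᵥ R.mulVec v)) := (hcont.tendsto v).comp hsum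
  have hle : v ⬝ᵥ R.mulVec v ≤ W * A :=
    le_of_tendsto htend (Filter.Eventually.of_forall key)
  rw [ge_iff_le, inv_mul_le_iff₀ hM1hpos]
  exact hle
end

section
/- Let R be an n×n real symmetric positive definite matrix, M : ℕ → ℝ a nonnegative function and x : ℕ → ℝⁿ a function, such that the series ∑_{i=0}^∞ M(i), ∑_{i=0}^∞ i·M(i), ∑_{i=0}^∞ i²·M(i), ∑_{i=0}^∞ M(i)x(i), ∑_{i=0}^∞ i·M(i)x(i) and ∑_{i=0}^∞ M(i)x(i)ᵀRx(i) are (absolutely) convergent. Set M₀ := ∑_{i=0}^∞ M(i), M₁ := ∑_{i=0}^∞ i·M(i), M₂ := ∑_{i=0}^∞ i²·M(i), and assume M₀ > 0 and M₂ − M₁²/M₀ > 0. Then ∑_{i=0}^∞ M(i) x(i)ᵀ R x(i) ≥ M₀⁻¹ (∑_{i=0}^∞ M(i)x(i))ᵀ R (∑_{i=0}^∞ M(i)x(i)) + (M₂ − M₁²/M₀)⁻¹ Π̃ᵀ R Π̃, where Π̃ := (M₁/M₀) ∑_{i=0}^∞ M(i)x(i) − ∑_{i=0}^∞ i·M(i)x(i).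 -/
/-!
For every `c d`, the weighted residual sum `∑ Mᵢ (xᵢ - c - i d)ᵀ R (xᵢ - c - i d)` is nonnegative.
Expanding it bounds `∑ Mᵢ xᵢᵀ R xᵢ` from below by a concave quadratic in `(c, d)`, and choosing
`(c, d)` as the weighted least-squares fit of `xᵢ` by `c + i d` makes that quadratic equal to the
right-hand side, with `Π̃ = -V d` for `V = M₂ - M₁² / M₀`.
-/

open Matrix LinearMap.BilinForm

theorem Matrix.PosSemidef.isPosSemidef_toBilin' {ι 𝕜 : Type*} [Fintype ι] [DecidableEq ι]
    [CommRing 𝕜] [PartialOrder 𝕜] [StarRing 𝕜] [TrivialStar 𝕜] {A : Matrix ι ι 𝕜}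
    (hA : A.PosSemidef) : (toBilin' A).IsPosSemidef :=
  isPosSemidef_def.2
    ⟨isSymm_toBilin'_iff_isSymm.2 (isHermitian_iff_isSymm.1 hA.isHermitian),
      ⟨fun u => by simpa [toBilin'_apply'] using hA.dotProduct_mulVec_nonneg u⟩⟩

namespace LinearMap.BilinForm

variable {E : Type*}

section Algebra

variable [AddCommGroup E] [Module ℝ E] {B : LinearMap.BilinForm ℝ E}

theorem apply_sub_sub_smul_self (hB : B.IsSymm) (x c d : E) (t : ℝ) :
    B (x - c - t • d) (x - c - t • d) =
      B x x - 2 * B x c - 2 * t * B x d + (B c c + 2 * t * B c d + t ^ 2 * B d d) := by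
  simp only [map_sub, map_smul, LinearMap.sub_apply, LinearMap.smul_apply, smul_eq_mul,
    hB.eq c x, hB.eq d x, hB.eq d c]
  ring

theorem quadratic_eq_of_normal_eq (hB : B.IsSymm) {m₀ m₁ m₂ : ℝ} {a b c d : E}
    (ha : m₀ • c + m₁ • d = a) (hb : m₁ • c + m₂ • d = b) :
    2 * B a c + 2 * B b d - (m₀ * B c c + 2 * m₁ * B c d + m₂ * B d d) = B a c + B b d := by
  subst ha hb
  simp only [map_add, map_smul, LinearMap.add_apply, LinearMap.smul_apply, smul_eq_mul,
    hB.eq d c]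
  ring

end Algebra

variable [NormedAddCommGroup E] [NormedSpace ℝ E] [FiniteDimensional ℝ E]
  {B : LinearMap.BilinForm ℝ E} {ι : Type*} {w t : ι → ℝ} {x : ι → E} {m₀ m₁ m₂ S : ℝ} {a b : E}

theorem hasSum_mul_apply_sub_sub_smul_self (hB : B.IsSymm) (hm₀ : HasSum w m₀)
    (hm₁ : HasSum (fun i => t i * w i) m₁) (hm₂ : HasSum (fun i => t i ^ 2 * w i) m₂)
    (ha : HasSum (fun i => w i • x i) a) (hb : HasSum (fun i => (t i * w i) • x i) b)
    (hS : HasSum (fun i => w i * B (x i) (x i)) S) (c d : E) :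
    HasSum (fun i => w i * B (x i - c - t i • d) (x i - c - t i • d))
      (S - 2 * B a c - 2 * B b d + (m₀ * B c c + 2 * m₁ * B c d + m₂ * B d d)) := by
  have hac : HasSum (fun i => w i * B (x i) c) (B a c) := by
    simpa [Function.comp_def] using ha.map (B.flip c) (LinearMap.continuous_of_finiteDimensional _)
  have hbd : HasSum (fun i => t i * w i * B (x i) d) (B b d) := by
    simpa [Function.comp_def] using hb.map (B.flip d) (LinearMap.continuous_of_finiteDimensional _)
  refine (((hS.sub (hac.mul_left 2)).sub (hbd.mul_left 2)).add (((hm₀.mul_right (B c c)).add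
    ((hm₁.mul_left 2).mul_right (B c d))).add (hm₂.mul_right (B d d)))).congr_fun fun i => ?_
  rw [apply_sub_sub_smul_self hB]
  ring

theorem quadratic_le_of_hasSum (hB : B.IsPosSemidef) (hw : ∀ i, 0 ≤ w i) (hm₀ : HasSum w m₀)
    (hm₁ : HasSum (fun i => t i * w i) m₁) (hm₂ : HasSum (fun i => t i ^ 2 * w i) m₂)
    (ha : HasSum (fun i => w i • x i) a) (hb : HasSum (fun i => (t i * w i) • x i) b)
    (hS : HasSum (fun i => w i * B (x i) (x i)) S) (c d : E) :
    2 * B a c + 2 * B b d - (m₀ * B c c + 2 * m₁ * B c d + m₂ * B d d) ≤ S := by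
  have := (hasSum_mul_apply_sub_sub_smul_self hB.isSymm hm₀ hm₁ hm₂ ha hb hS c d).nonneg
    fun i => mul_nonneg (hw i) (hB.isNonneg.nonneg _)
  linarith

theorem inv_mul_add_inv_mul_le_of_hasSum (hB : B.IsPosSemidef) (hw : ∀ i, 0 ≤ w i)
    (hm₀ : HasSum w m₀) (hm₁ : HasSum (fun i => t i * w i) m₁)
    (hm₂ : HasSum (fun i => t i ^ 2 * w i) m₂) (ha : HasSum (fun i => w i • x i) a)
    (hb : HasSum (fun i => (t i * w i) • x i) b) (hS : HasSum (fun i => w i * B (x i) (x i)) S)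
    (h₀ : m₀ ≠ 0) (hV : m₂ - m₁ ^ 2 / m₀ ≠ 0) :
    m₀⁻¹ * B a a + (m₂ - m₁ ^ 2 / m₀)⁻¹ * B ((m₁ / m₀) • a - b) ((m₁ / m₀) • a - b) ≤ S := by
  generalize hV_def : m₂ - m₁ ^ 2 / m₀ = V at hV ⊢
  obtain ⟨π, rfl⟩ : ∃ π, b = (m₁ / m₀) • a - π := ⟨(m₁ / m₀) • a - b, by abel⟩
  -- `c = m₀⁻¹ • (a + (m₁ / V) • π)` and `d = -V⁻¹ • π` solve the normal equations of the fit.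
  have hc : m₀ • m₀⁻¹ • (a + (m₁ / V) • π) + m₁ • -V⁻¹ • π = a := by
    rw [smul_smul, mul_inv_cancel₀ h₀, one_smul]
    module
  have hd : m₁ • m₀⁻¹ • (a + (m₁ / V) • π) + m₂ • -V⁻¹ • π = (m₁ / m₀) • a - π := by
    obtain rfl : m₂ = V + m₁ ^ 2 / m₀ := by rw [← hV_def]; ring
    match_scalars
    · ring
    · field_simp
      ring
  rw [sub_sub_cancel]
  calc m₀⁻¹ * B a a + V⁻¹ * B π π
        = B a (m₀⁻¹ • (a + (m₁ / V) • π)) + B ((m₁ / m₀) • a - π) (-V⁻¹ • π) := by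
        simp only [map_add, map_sub, map_smul, LinearMap.sub_apply,
          LinearMap.smul_apply, smul_eq_mul]
        ring
    _ = _ := (quadratic_eq_of_normal_eq hB.isSymm hc hd).symm
    _ ≤ S := quadratic_le_of_hasSum hB hw hm₀ hm₁ hm₂ ha hb hS _ _

end LinearMap.BilinForm

theorem extended_jensen_summation_infinite_moments_general {n : ℕ}
    (R : Matrix (Fin n) (Fin n) ℝ) (hRpd : R.PosDef)
    (M : ℕ → ℝ) (x : ℕ → (Fin n → ℝ))
    (hMnonneg : ∀ i, 0 ≤ M i)
    (hM : Summable M)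
    (hiM : Summable (fun i : ℕ => (i : ℝ) * M i))
    (hi2M : Summable (fun i : ℕ => (i : ℝ) ^ 2 * M i))
    (hMx : Summable (fun i : ℕ => M i • x i))
    (hiMx : Summable (fun i : ℕ => ((i : ℝ) * M i) • x i))
    (hMxRx : Summable (fun i : ℕ => M i * (x i ⬝ᵥ R.mulVec (x i))))
    (M0 M1 M2 : ℝ)
    (hM0 : M0 = ∑' i : ℕ, M i)
    (hM1 : M1 = ∑' i : ℕ, (i : ℝ) * M i)
    (hM2 : M2 = ∑' i : ℕ, (i : ℝ) ^ 2 * M i)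
    (hM0pos : 0 < M0)
    (hvar : 0 < M2 - M1 ^ 2 / M0)
    (Pi0 : Fin n → ℝ)
    (hPi0 : Pi0 = (M1 / M0) • (∑' i : ℕ, M i • x i) - ∑' i : ℕ, ((i : ℝ) * M i) • x i) :
    ∑' i : ℕ, M i * (x i ⬝ᵥ R.mulVec (x i)) ≥
      M0⁻¹ * ((∑' i : ℕ, M i • x i) ⬝ᵥ R.mulVec (∑' i : ℕ, M i • x i)) +
      (M2 - M1 ^ 2 / M0)⁻¹ * (Pi0 ⬝ᵥ R.mulVec Pi0) := by
  subst hM0 hM1 hM2 hPi0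
  have hS : HasSum (fun i => M i * toBilin' R (x i) (x i)) (∑' i, M i * (x i ⬝ᵥ R *ᵥ x i)) := by
    simpa only [toBilin'_apply'] using hMxRx.hasSum
  simpa only [toBilin'_apply'] using
    inv_mul_add_inv_mul_le_of_hasSum hRpd.posSemidef.isPosSemidef_toBilin'
      (t := fun i : ℕ => (i : ℝ)) hMnonneg hM.hasSum hiM.hasSum hi2M.hasSum hMx.hasSum
      hiMx.hasSum hS hM0pos.ne' hvar.ne'

/-- Corollary 3: extended Jensen summation inequality with the first-moment
auxiliary sequence. -/
theorem extended_jensen_summation_infinite_moments {n : ℕ}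
    (R : Matrix (Fin n) (Fin n) ℝ) (hRsym : R.IsSymm) (hRpd : R.PosDef)
    (M : ℕ → ℝ) (x : ℕ → (Fin n → ℝ))
    (hMnonneg : ∀ i, 0 ≤ M i)
    (hM : Summable M)
    (hiM : Summable (fun i : ℕ => (i : ℝ) * M i))
    (hi2M : Summable (fun i : ℕ => (i : ℝ) ^ 2 * M i))
    (hMx : Summable (fun i : ℕ => M i • x i))
    (hiMx : Summable (fun i : ℕ => ((i : ℝ) * M i) • x i))
    (hMxRx : Summable (fun i : ℕ => M i * (x i ⬝ᵥ R.mulVec (x i))))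
    (M0 M1 M2 : ℝ)
    (hM0 : M0 = ∑' i : ℕ, M i)
    (hM1 : M1 = ∑' i : ℕ, (i : ℝ) * M i)
    (hM2 : M2 = ∑' i : ℕ, (i : ℝ) ^ 2 * M i)
    (hM0pos : 0 < M0)
    (hvar : 0 < M2 - M1 ^ 2 / M0)
    (Pi0 : Fin n → ℝ)
    (hPi0 : Pi0 = (M1 / M0) • (∑' i : ℕ, M i • x i) - ∑' i : ℕ, ((i : ℝ) * M i) • x i) :
    ∑' i : ℕ, M i * (x i ⬝ᵥ R.mulVec (x i)) ≥
      M0⁻¹ * ((∑' i : ℕ, M i • x i) ⬝ᵥ R.mulVec (∑' i : ℕ, M i • x i)) +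
      (M2 - M1 ^ 2 / M0)⁻¹ * (Pi0 ⬝ᵥ R.mulVec Pi0) :=
  extended_jensen_summation_infinite_moments_general R hRpd M x hMnonneg hM hiM hi2M hMx hiMx hMxRx
    M0 M1 M2 hM0 hM1 hM2 hM0pos hvar Pi0 hPi0
end
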